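/- Let G = (V,E) be a cubic graph with no connected component whose induced subgraph is isomorphic to K4, and let S ⊆ V be nonempty. If the induced subgraph G[S] is not isomorphic to the triangle K3, not isomorphic to the diamond (K4 minus one edge), and not isomorphic to the 5-vertex graph obtained from a diamond by adding a new vertex adjacent to the two degree-2 vertices of the diamond, then 4·|E(S)| ≤ |S|², i.e., u(S) ≤ 1/4. -/

import Mathlib

open Finset

/-- The number of edges of `G` with both endpoints in `S`. -/
noncomputable def edgesIn {V : Type*} (G : SimpleGraph V) (S : Finset V) : ℕ :=
  Set.ncard {e : Sym2 V | e ∈ G.edgeSet ∧ ∀ v ∈ e, v ∈ S}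

/-- The density of the set `S` of vertices in `G`: `|E(S)|/|S|`. -/
noncomputable def density {V : Type*} (G : SimpleGraph V) (S : Finset V) : ℚ :=
  (edgesIn G S : ℚ) / (S.card : ℚ)

/-- The density of a partition: the sum of the densities of its parts. -/
noncomputable def partDensity {V : Type*} [DecidableEq V] (G : SimpleGraph V) {s : Finset V}
    (P : Finpartition s) : ℚ :=
  ∑ p ∈ P.parts, density G p

/-- `S` is the vertex set of a connected component of `G` inducing a `K₄`:
it has 4 vertices, is a clique, and is closed under adjacency. -/
def IsK4Component {V : Type*} (G : SimpleGraph V) (S : Finset V) : Prop :=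
  S.card = 4 ∧ (∀ u ∈ S, ∀ v ∈ S, u ≠ v → G.Adj u v) ∧ (∀ u ∈ S, ∀ v, G.Adj u v → v ∈ S)

/-- The diamond graph: `K₄` minus the edge `{0,1}`. -/
def diamondGraph : SimpleGraph (Fin 4) :=
  SimpleGraph.fromEdgeSet {s(0, 2), s(0, 3), s(1, 2), s(1, 3), s(2, 3)}

/-- The 5-vertex graph obtained from a diamond by adding a new vertex (vertex `4`)
adjacent to the two degree-2 vertices (`0` and `1`) of the diamond. -/
def case1Graph : SimpleGraph (Fin 5) :=
  SimpleGraph.fromEdgeSet {s(0, 2), s(0, 3), s(1, 2), s(1, 3), s(2, 3), s(0, 4), s(1, 4)}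

section Aux

set_option linter.unusedSectionVars false

variable {V : Type*} [Fintype V] [DecidableEq V] (G : SimpleGraph V) [DecidableRel G.Adj]

/-- The subgraph of `G` induced on `S`, as a graph on `V`. -/
def inducedOn (S : Finset V) : SimpleGraph V where
  Adj u v := G.Adj u v ∧ u ∈ S ∧ v ∈ S
  symm := ⟨fun u v ⟨h, hu, hv⟩ => ⟨h.symm, hv, hu⟩⟩
  loopless := ⟨fun v ⟨h, _⟩ => G.loopless.irrefl v h⟩

instance (S : Finset V) : DecidableRel (inducedOn G S).Adj :=
  fun u v => inferInstanceAs (Decidable (G.Adj u v ∧ u ∈ S ∧ v ∈ S))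

lemma edgesIn_eq (S : Finset V) : edgesIn G S = (inducedOn G S).edgeFinset.card := by
  have hset : {e : Sym2 V | e ∈ G.edgeSet ∧ ∀ v ∈ e, v ∈ S} = (inducedOn G S).edgeSet := by
    ext e
    induction e with
    | _ u v =>
      simp only [Set.mem_setOf_eq, SimpleGraph.mem_edgeSet, Sym2.mem_iff, inducedOn]
      constructor
      · rintro ⟨h, hm⟩; exact ⟨h, hm u (Or.inl rfl), hm v (Or.inr rfl)⟩
      · rintro ⟨h, hu, hv⟩; exact ⟨h, fun w hw => by rcases hw with rfl | rfl <;> assumption⟩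
  rw [edgesIn, hset, SimpleGraph.edgeFinset, Set.ncard_eq_toFinset_card']

lemma degree_inducedOn (S : Finset V) (v : V) (hv : v ∈ S) :
    (inducedOn G S).degree v = (S.filter (G.Adj v)).card := by
  rw [SimpleGraph.degree]
  congr 1
  ext u
  rw [SimpleGraph.mem_neighborFinset]
  simp [SimpleGraph.mem_neighborFinset, inducedOn, hv, and_comm]

lemma degree_inducedOn_zero (S : Finset V) (v : V) (hv : v ∉ S) :
    (inducedOn G S).degree v = 0 := by
  rw [SimpleGraph.degree]
  convert Finset.card_empty
  ext u
  rw [SimpleGraph.mem_neighborFinset]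
  simp only [SimpleGraph.mem_neighborFinset, inducedOn, Finset.notMem_empty, iff_false]
  rintro ⟨-, hv', -⟩; exact hv hv'

lemma handshake (S : Finset V) :
    ∑ v ∈ S, (S.filter (G.Adj v)).card = 2 * edgesIn G S := by
  rw [edgesIn_eq, ← SimpleGraph.sum_degrees_eq_twice_card_edges]
  rw [← Finset.sum_subset (Finset.subset_univ S)]
  · exact Finset.sum_congr rfl fun v hv => (degree_inducedOn G S v hv).symm
  · exact fun v _ hv => degree_inducedOn_zero G S v hv

lemma dS_le_degree (S : Finset V) (v : V) : (S.filter (G.Adj v)).card ≤ G.degree v := by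
  rw [SimpleGraph.degree]
  apply Finset.card_le_card
  intro u hu
  simp only [Finset.mem_filter] at hu
  simp [SimpleGraph.mem_neighborFinset, hu.2]

lemma filter_subset_erase (S : Finset V) (v : V) : S.filter (G.Adj v) ⊆ S.erase v := by
  intro u hu
  simp only [Finset.mem_filter] at hu
  exact Finset.mem_erase.mpr ⟨(G.ne_of_adj hu.2).symm, hu.1⟩

lemma dS_le_card (S : Finset V) (v : V) (hv : v ∈ S) :
    (S.filter (G.Adj v)).card ≤ S.card - 1 := by
  calc (S.filter (G.Adj v)).card ≤ (S.erase v).card :=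
        Finset.card_le_card (filter_subset_erase G S v)
    _ = S.card - 1 := Finset.card_erase_of_mem hv

lemma full_vertex (S : Finset V) (v : V) (hv : v ∈ S)
    (h : S.card - 1 ≤ (S.filter (G.Adj v)).card) :
    ∀ u ∈ S, u ≠ v → G.Adj v u := by
  have heq : S.filter (G.Adj v) = S.erase v := by
    apply Finset.eq_of_subset_of_card_le (filter_subset_erase G S v)
    rw [Finset.card_erase_of_mem hv]; exact h
  intro u hu hne
  have : u ∈ S.filter (G.Adj v) := heq ▸ Finset.mem_erase.mpr ⟨hne, hu⟩
  exact (Finset.mem_filter.mp this).2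

/-- If all degrees within `S` are at most `k` and the degree sum is `k * |S|`,
then all degrees are `k`. -/
lemma all_eq_of_sum (S : Finset V) (f : V → ℕ) (k : ℕ) (hle : ∀ v ∈ S, f v ≤ k)
    (hsum : ∑ v ∈ S, f v = S.card * k) : ∀ v ∈ S, f v = k := by
  by_contra hc
  push_neg at hc
  obtain ⟨v, hv, hne⟩ := hc
  have : ∑ v ∈ S, f v < ∑ _v ∈ S, k :=
    Finset.sum_lt_sum hle ⟨v, hv, lt_of_le_of_ne (hle v hv) hne⟩
  rw [Finset.sum_const, smul_eq_mul] at this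
  omega

/-- A vertex of `S` with a unique non-neighbor `z` within `S` is adjacent to
everything else in `S`. -/
lemma unique_nonneighbor (S : Finset V) (v z : V) (hv : v ∈ S)
    (hcardN : ((S.erase v).filter (fun u => ¬ G.Adj v u)).card = 1)
    (hz : z ∈ S) (hzv : z ≠ v) (hvz : ¬ G.Adj v z) :
    ∀ u ∈ S, u ≠ v → u ≠ z → G.Adj v u := by
  obtain ⟨y, hy⟩ := Finset.card_eq_one.mp hcardN
  have hzy : z = y := by
    have : z ∈ (S.erase v).filter (fun u => ¬ G.Adj v u) := by
      simp [Finset.mem_erase, hzv, hz, hvz]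
    rw [hy] at this
    simpa using this
  intro u hu huv huz
  by_contra hadj
  have : u ∈ (S.erase v).filter (fun u => ¬ G.Adj v u) := by
    simp [Finset.mem_erase, huv, hu, hadj]
  rw [hy] at this
  simp at this
  exact huz (this.trans hzy.symm)

lemma iso_of_list {n : ℕ} (F : SimpleGraph (Fin n)) (S : Finset V) (g : Fin n → V)
    (hmem : ∀ i, g i ∈ S) (hinj : Function.Injective g) (hcard : S.card = n)
    (hadj : ∀ i j, F.Adj i j ↔ G.Adj (g i) (g j)) :
    Nonempty (F ≃g G.induce (S : Set V)) := by
  set g' : Fin n → ↥(S : Set V) := fun i => ⟨g i, by simpa using hmem i⟩ with hg'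
  have hinj' : Function.Injective g' := fun i j h => hinj (congrArg Subtype.val h)
  have hbij : Function.Bijective g' := by
    rw [Fintype.bijective_iff_injective_and_card]
    refine ⟨hinj', ?_⟩
    simp [hcard]
  refine ⟨⟨Equiv.ofBijective g' hbij, ?_⟩⟩
  intro i j
  show (G.induce (S : Set V)).Adj (g' i) (g' j) ↔ F.Adj i j
  rw [hadj i j]
  rfl

end Aux

theorem stmt5 {V : Type*} [Fintype V] [DecidableEq V] (G : SimpleGraph V) [DecidableRel G.Adj]
    (hcubic : ∀ v : V, G.degree v = 3)
    (hK4 : ¬ ∃ S : Finset V, IsK4Component G S)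
    (S : Finset V) (hS : S.Nonempty)
    (hK3 : IsEmpty (G.induce (S : Set V) ≃g (⊤ : SimpleGraph (Fin 3))))
    (hDiam : IsEmpty (G.induce (S : Set V) ≃g diamondGraph))
    (hCase1 : IsEmpty (G.induce (S : Set V) ≃g case1Graph)) :
    4 * edgesIn G S ≤ S.card ^ 2 := by
  classical
  have hhs := handshake G S
  have hdeg3 : ∀ v ∈ S, (S.filter (G.Adj v)).card ≤ 3 := fun v _ =>
    (dS_le_degree G S v).trans (le_of_eq (hcubic v))
  have h2E3 : 2 * edgesIn G S ≤ 3 * S.card := by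
    rw [← hhs]
    calc ∑ v ∈ S, (S.filter (G.Adj v)).card ≤ ∑ _v ∈ S, 3 := Finset.sum_le_sum hdeg3
      _ = 3 * S.card := by rw [Finset.sum_const, smul_eq_mul, mul_comm]
  have h2Ec : 2 * edgesIn G S ≤ S.card * (S.card - 1) := by
    rw [← hhs]
    calc ∑ v ∈ S, (S.filter (G.Adj v)).card ≤ ∑ _v ∈ S, (S.card - 1) :=
          Finset.sum_le_sum fun v hv => dS_le_card G S v hv
      _ = S.card * (S.card - 1) := by rw [Finset.sum_const, smul_eq_mul]
  rw [pow_two]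
  by_cases h6 : 6 ≤ S.card
  · calc 4 * edgesIn G S ≤ 6 * S.card := by omega
      _ ≤ S.card * S.card := Nat.mul_le_mul_right _ h6
  · push_neg at h6
    have h1 : 1 ≤ S.card := hS.card_pos
    have hcases : S.card = 1 ∨ S.card = 2 ∨ S.card = 3 ∨ S.card = 4 ∨ S.card = 5 := by omega
    rcases hcases with hc | hc | hc | hc | hc
    -- |S| = 1 or 2
    · rw [hc] at h2Ec ⊢; omega
    · rw [hc] at h2Ec ⊢; omega
    -- |S| = 3
    · rw [hc] at h2Ec ⊢
      by_cases hE : edgesIn G S = 3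
      · exfalso
        have hall : ∀ v ∈ S, (S.filter (G.Adj v)).card = 2 := by
          apply all_eq_of_sum S _ 2
          · intro v hv; have := dS_le_card G S v hv; omega
          · rw [hhs, hE, hc]
        have hcomp : ∀ u ∈ S, ∀ w ∈ S, u ≠ w → G.Adj u w := by
          intro u hu w hw hne
          exact full_vertex G S u hu (by rw [hall u hu, hc]) w hw hne.symm
        obtain ⟨a, b, c, hab, hac, hbc, hSeq⟩ := Finset.card_eq_three.mp hc
        have ha : a ∈ S := by rw [hSeq]; simp
        have hb : b ∈ S := by rw [hSeq]; simp
        have hcm : c ∈ S := by rw [hSeq]; simp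
        have hAab := hcomp a ha b hb hab
        have hAac := hcomp a ha c hcm hac
        have hAbc := hcomp b hb c hcm hbc
        have hAba := hAab.symm
        have hAca := hAac.symm
        have hAcb := hAbc.symm
        have hba' : b ≠ a := Ne.symm hab
        have hca' : c ≠ a := Ne.symm hac
        have hcb' : c ≠ b := Ne.symm hbc
        have hmem3 : ∀ i, (![a, b, c] : Fin 3 → V) i ∈ S := by
          intro i; fin_cases i <;> assumption
        have hinj3 : Function.Injective (![a, b, c] : Fin 3 → V) := by
          intro i j hij
          fin_cases i <;> fin_cases j <;>
            first
              | rfl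
              | exact absurd hij (by assumption)
        have hadj3 : ∀ i j, (⊤ : SimpleGraph (Fin 3)).Adj i j ↔
            G.Adj ((![a, b, c] : Fin 3 → V) i) ((![a, b, c] : Fin 3 → V) j) := by
          intro i j
          fin_cases i <;> fin_cases j <;>
            simp only [SimpleGraph.top_adj, Matrix.cons_val', Matrix.cons_val_zero,
              Matrix.cons_val_one, Matrix.head_cons, Matrix.cons_val_two, Matrix.tail_cons] <;>
            norm_num [Fin.ext_iff] <;>
            first
              | assumption
              | exact G.irrefl
        obtain ⟨iso⟩ := iso_of_list G (⊤ : SimpleGraph (Fin 3)) S ![a, b, c] hmem3 hinj3 hc hadj3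
        exact (hK3.false iso.symm).elim
      · omega
    -- |S| = 4
    · rw [hc] at h2Ec ⊢
      by_cases hE6 : edgesIn G S = 6
      · exfalso
        have hall : ∀ v ∈ S, (S.filter (G.Adj v)).card = 3 := by
          apply all_eq_of_sum S _ 3
          · exact hdeg3
          · rw [hhs, hE6, hc]
        have hcomp : ∀ u ∈ S, ∀ w ∈ S, u ≠ w → G.Adj u w := by
          intro u hu w hw hne
          exact full_vertex G S u hu (by rw [hall u hu, hc]) w hw hne.symm
        apply hK4
        refine ⟨S, hc, hcomp, ?_⟩
        intro u hu v hadj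
        have hsub : S.erase u ⊆ G.neighborFinset u := by
          intro w hw
          rw [SimpleGraph.mem_neighborFinset]
          exact hcomp u hu w (Finset.mem_of_mem_erase hw) (Finset.ne_of_mem_erase hw).symm
        have heq : S.erase u = G.neighborFinset u := by
          apply Finset.eq_of_subset_of_card_le hsub
          rw [Finset.card_erase_of_mem hu, hc]
          have : (G.neighborFinset u).card = 3 := by
            rw [← SimpleGraph.degree]; exact hcubic u
          omega
        have : v ∈ G.neighborFinset u := by
          rw [SimpleGraph.mem_neighborFinset]; exact hadj
        rw [← heq] at this
        exact Finset.mem_of_mem_erase this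
      · by_cases hE5 : edgesIn G S = 5
        · exfalso
          -- find two vertices of S-degree ≤ 2
          have hsum : ∑ v ∈ S, (S.filter (G.Adj v)).card = 10 := by rw [hhs, hE5]
          have hex_a : ∃ a ∈ S, (S.filter (G.Adj a)).card ≤ 2 := by
            by_contra hcon
            push_neg at hcon
            have : ∑ v ∈ S, (S.filter (G.Adj v)).card = 12 := by
              have : ∀ v ∈ S, (S.filter (G.Adj v)).card = 3 := fun v hv =>
                le_antisymm (hdeg3 v hv) (hcon v hv)
              rw [Finset.sum_congr rfl this, Finset.sum_const, hc]
              simp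
            omega
          obtain ⟨a, ha, hda⟩ := hex_a
          have hex_b : ∃ b ∈ S, b ≠ a ∧ (S.filter (G.Adj b)).card ≤ 2 := by
            by_contra hcon
            push_neg at hcon
            have hfull : ∀ v ∈ S, v ≠ a → (S.filter (G.Adj v)).card = 3 := by
              intro v hv hne
              have := hcon v hv hne
              have := hdeg3 v hv
              omega
            have hsub : S.erase a ⊆ S.filter (G.Adj a) := by
              intro u hu
              have huS := Finset.mem_of_mem_erase hu
              have hune := Finset.ne_of_mem_erase hu
              have : G.Adj u a := full_vertex G S u huS
                (by rw [hfull u huS hune, hc]) a ha (Ne.symm hune)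
              exact Finset.mem_filter.mpr ⟨huS, this.symm⟩
            have := Finset.card_le_card hsub
            rw [Finset.card_erase_of_mem ha, hc] at this
            omega
          obtain ⟨b, hb, hba, hdb⟩ := hex_b
          -- remaining two vertices
          have hcd2 : (S \ {a, b}).card = 2 := by
            rw [Finset.card_sdiff_of_subset (by intro x hx; simp at hx; rcases hx with rfl | rfl <;> assumption)]
            rw [hc, Finset.card_pair (Ne.symm hba)]
          obtain ⟨cc, dd, hccdd, hCD⟩ := Finset.card_eq_two.mp hcd2
          have hcmem : cc ∈ S \ {a, b} := by rw [hCD]; simp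
          have hdmem : dd ∈ S \ {a, b} := by rw [hCD]; simp
          simp only [Finset.mem_sdiff, Finset.mem_insert, Finset.mem_singleton, not_or] at hcmem hdmem
          have hcS : cc ∈ S := hcmem.1
          have hca : cc ≠ a := hcmem.2.1
          have hcb : cc ≠ b := hcmem.2.2
          have hdS : dd ∈ S := hdmem.1
          have hdna : dd ≠ a := hdmem.2.1
          have hdnb : dd ≠ b := hdmem.2.2
          -- degree values
          have hsplit := Finset.sum_sdiff (s₁ := {a, b}) (s₂ := S)
            (f := fun v => (S.filter (G.Adj v)).card)
            (by intro x hx; simp at hx; rcases hx with rfl | rfl <;> assumption)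
          have hsplit' : ((S.filter (G.Adj cc)).card + (S.filter (G.Adj dd)).card)
              + ((S.filter (G.Adj a)).card + (S.filter (G.Adj b)).card) = 10 := by
            rw [hCD] at hsplit
            simp only [Finset.sum_pair hccdd, Finset.sum_pair (Ne.symm hba)] at hsplit
            rw [hsplit]
            exact hsum
          have hdc3 : (S.filter (G.Adj cc)).card = 3 := by
            have := hdeg3 cc hcS; have := hdeg3 dd hdS; omega
          have hdd3 : (S.filter (G.Adj dd)).card = 3 := by
            have := hdeg3 cc hcS; have := hdeg3 dd hdS; omega
          have hda2 : (S.filter (G.Adj a)).card = 2 := by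
            have := hdeg3 cc hcS; have := hdeg3 dd hdS; omega
          -- adjacencies
          have hfc := full_vertex G S cc hcS (by rw [hdc3, hc])
          have hfd := full_vertex G S dd hdS (by rw [hdd3, hc])
          have hAca := hfc a ha (Ne.symm hca)
          have hAcb := hfc b hb (Ne.symm hcb)
          have hAcd := hfc dd hdS (Ne.symm hccdd)
          have hAda := hfd a ha (Ne.symm hdna)
          have hAdb := hfd b hb (Ne.symm hdnb)
          have hNab : ¬ G.Adj a b := by
            intro hadj
            have hsub : {b, cc, dd} ⊆ S.filter (G.Adj a) := by
              intro x hx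
              simp only [Finset.mem_insert, Finset.mem_singleton] at hx
              rcases hx with rfl | rfl | rfl
              · exact Finset.mem_filter.mpr ⟨hb, hadj⟩
              · exact Finset.mem_filter.mpr ⟨hcS, hAca.symm⟩
              · exact Finset.mem_filter.mpr ⟨hdS, hAda.symm⟩
            have hcard3 : ({b, cc, dd} : Finset V).card = 3 := by
              rw [Finset.card_insert_of_notMem (by simp [Ne.symm hcb, Ne.symm hdnb, hccdd]),
                Finset.card_pair hccdd]
            have := Finset.card_le_card hsub
            omega
          -- build the diamond iso
          have hAac := hAca.symm
          have hAad := hAda.symm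
          have hAbc := hAcb.symm
          have hAbd := hAdb.symm
          have hNba : ¬ G.Adj b a := fun h => hNab h.symm
          have hAdc := hAcd.symm
          have e0 : ((0 : Fin 4) : ℕ) = 0 := by decide
          have e1 : ((1 : Fin 4) : ℕ) = 1 := by decide
          have e2 : ((2 : Fin 4) : ℕ) = 2 := by decide
          have e3 : ((3 : Fin 4) : ℕ) = 3 := by decide
          have hab' : a ≠ b := Ne.symm hba
          have hac' : a ≠ cc := Ne.symm hca
          have had' : a ≠ dd := Ne.symm hdna
          have hbc' : b ≠ cc := Ne.symm hcb
          have hbd' : b ≠ dd := Ne.symm hdnb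
          have hdc' : dd ≠ cc := Ne.symm hccdd
          have hmem4 : ∀ i, (![a, b, cc, dd] : Fin 4 → V) i ∈ S := by
            intro i; fin_cases i <;> assumption
          have hinj4 : Function.Injective (![a, b, cc, dd] : Fin 4 → V) := by
            intro i j hij
            fin_cases i <;> fin_cases j <;>
              first
                | rfl
                | exact absurd hij (by assumption)
          have hadj4 : ∀ i j, diamondGraph.Adj i j ↔
              G.Adj ((![a, b, cc, dd] : Fin 4 → V) i) ((![a, b, cc, dd] : Fin 4 → V) j) := by
            intro i j
            fin_cases i <;> fin_cases j <;>
              simp only [diamondGraph, SimpleGraph.fromEdgeSet_adj, Set.mem_insert_iff,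
                Set.mem_singleton_iff, Matrix.cons_val', Matrix.cons_val_zero,
                Matrix.cons_val_one, Matrix.head_cons, Matrix.cons_val_two, Matrix.tail_cons,
                Matrix.cons_val_three] <;>
              norm_num [Sym2.eq, Sym2.rel_iff', Prod.ext_iff, Fin.ext_iff, e0, e1, e2, e3] <;>
              first
                | assumption
                | exact G.irrefl
          obtain ⟨iso⟩ := iso_of_list G diamondGraph S ![a, b, cc, dd] hmem4 hinj4 hc hadj4
          exact (hDiam.false iso.symm).elim
        · omega
    -- |S| = 5
    · rw [hc] at h2Ec ⊢
      by_cases hE7 : edgesIn G S = 7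
      · exfalso
        have hsum : ∑ v ∈ S, (S.filter (G.Adj v)).card = 14 := by rw [hhs, hE7]
        -- the unique vertex of S-degree 2
        have hex_x : ∃ x ∈ S, (S.filter (G.Adj x)).card ≤ 2 := by
          by_contra hcon
          push_neg at hcon
          have : ∑ v ∈ S, (S.filter (G.Adj v)).card = 15 := by
            have : ∀ v ∈ S, (S.filter (G.Adj v)).card = 3 := fun v hv =>
              le_antisymm (hdeg3 v hv) (hcon v hv)
            rw [Finset.sum_congr rfl this, Finset.sum_const, hc]
            simp
          omega
        obtain ⟨x, hx, hdx⟩ := hex_x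
        have hothers : ∀ v ∈ S, v ≠ x → (S.filter (G.Adj v)).card = 3 := by
          intro w hw hwx
          by_contra hcon
          have hdw : (S.filter (G.Adj w)).card ≤ 2 := by
            have := hdeg3 w hw; omega
          have hsplit := Finset.sum_sdiff (s₁ := {x, w}) (s₂ := S)
            (f := fun v => (S.filter (G.Adj v)).card)
            (by intro y hy; simp at hy; rcases hy with rfl | rfl <;> assumption)
          have hsplit' : ∑ v ∈ S \ {x, w}, (S.filter (G.Adj v)).card
              + ((S.filter (G.Adj x)).card + (S.filter (G.Adj w)).card) = 14 := by
            simp only [Finset.sum_pair (Ne.symm hwx)] at hsplit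
            rw [hsplit]
            exact hsum
          have hrest : ∑ v ∈ S \ {x, w}, (S.filter (G.Adj v)).card ≤ 9 := by
            have hcardr : (S \ {x, w}).card = 3 := by
              rw [Finset.card_sdiff_of_subset (by intro y hy; simp at hy; rcases hy with rfl | rfl <;> assumption)]
              rw [hc, Finset.card_pair (Ne.symm hwx)]
            calc ∑ v ∈ S \ {x, w}, (S.filter (G.Adj v)).card
                ≤ ∑ _v ∈ S \ {x, w}, 3 :=
                  Finset.sum_le_sum fun v hv => hdeg3 v (Finset.mem_sdiff.mp hv).1
              _ = 9 := by rw [Finset.sum_const, hcardr]; simp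
          omega
        have hdx2 : (S.filter (G.Adj x)).card = 2 := by
          have hsplit := Finset.sum_sdiff (s₁ := {x}) (s₂ := S)
            (f := fun v => (S.filter (G.Adj v)).card)
            (by simpa using hx)
          have hsplit' : ∑ v ∈ S \ {x}, (S.filter (G.Adj v)).card
              + (S.filter (G.Adj x)).card = 14 := by
            simp only [Finset.sum_singleton] at hsplit
            rw [hsplit]
            exact hsum
          have hrest : ∑ v ∈ S \ {x}, (S.filter (G.Adj v)).card = 12 := by
            have hcardr : (S \ {x}).card = 4 := by
              rw [Finset.card_sdiff_of_subset (by simpa using hx), hc, Finset.card_singleton]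
            have : ∀ v ∈ S \ {x}, (S.filter (G.Adj v)).card = 3 := by
              intro v hv
              obtain ⟨hvS, hvx⟩ := Finset.mem_sdiff.mp hv
              exact hothers v hvS (by simpa using hvx)
            rw [Finset.sum_congr rfl this, Finset.sum_const, hcardr]; simp
          omega
        -- neighbors and non-neighbors of x
        have hMeq : (S.erase x).filter (fun u => G.Adj x u) = S.filter (G.Adj x) := by
          ext u
          simp only [Finset.mem_filter, Finset.mem_erase]
          constructor
          · rintro ⟨⟨_, hu⟩, hadj⟩; exact ⟨hu, hadj⟩
          · rintro ⟨hu, hadj⟩; exact ⟨⟨(G.ne_of_adj hadj).symm, hu⟩, hadj⟩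
        have hMN := Finset.card_filter_add_card_filter_not
          (s := S.erase x) (p := fun u => G.Adj x u)
        rw [hMeq, hdx2, Finset.card_erase_of_mem hx, hc] at hMN
        have hNcard : ((S.erase x).filter (fun u => ¬ G.Adj x u)).card = 2 := by omega
        obtain ⟨cc, dd, hccdd, hNeq⟩ := Finset.card_eq_two.mp hNcard
        obtain ⟨aa, bb, haabb, hMeq2⟩ := Finset.card_eq_two.mp (by rw [hMeq, hdx2] :
          ((S.erase x).filter (fun u => G.Adj x u)).card = 2)
        have hcmem : cc ∈ (S.erase x).filter (fun u => ¬ G.Adj x u) := by rw [hNeq]; simp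
        have hdmem : dd ∈ (S.erase x).filter (fun u => ¬ G.Adj x u) := by rw [hNeq]; simp
        have hamem : aa ∈ (S.erase x).filter (fun u => G.Adj x u) := by rw [hMeq2]; simp
        have hbmem : bb ∈ (S.erase x).filter (fun u => G.Adj x u) := by rw [hMeq2]; simp
        simp only [Finset.mem_filter, Finset.mem_erase] at hcmem hdmem hamem hbmem
        have hcS : cc ∈ S := hcmem.1.2
        have hdS : dd ∈ S := hdmem.1.2
        have haS : aa ∈ S := hamem.1.2
        have hbS : bb ∈ S := hbmem.1.2
        have hcx : cc ≠ x := hcmem.1.1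
        have hdx' : dd ≠ x := hdmem.1.1
        have hax : aa ≠ x := hamem.1.1
        have hbx : bb ≠ x := hbmem.1.1
        have hNxc : ¬ G.Adj x cc := hcmem.2
        have hNxd : ¬ G.Adj x dd := hdmem.2
        have hAxa : G.Adj x aa := hamem.2
        have hAxb : G.Adj x bb := hbmem.2
        have hac : aa ≠ cc := fun h => hNxc (h ▸ hAxa)
        have had : aa ≠ dd := fun h => hNxd (h ▸ hAxa)
        have hbc : bb ≠ cc := fun h => hNxc (h ▸ hAxb)
        have hbd : bb ≠ dd := fun h => hNxd (h ▸ hAxb)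
        -- cc and dd have unique non-neighbor x
        have hNcc1 : ((S.erase cc).filter (fun u => ¬ G.Adj cc u)).card = 1 := by
          have := Finset.card_filter_add_card_filter_not
            (s := S.erase cc) (p := fun u => G.Adj cc u)
          have hMeqc : (S.erase cc).filter (fun u => G.Adj cc u) = S.filter (G.Adj cc) := by
            ext u
            simp only [Finset.mem_filter, Finset.mem_erase]
            constructor
            · rintro ⟨⟨_, hu⟩, hadj⟩; exact ⟨hu, hadj⟩
            · rintro ⟨hu, hadj⟩; exact ⟨⟨(G.ne_of_adj hadj).symm, hu⟩, hadj⟩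
          rw [hMeqc, hothers cc hcS hcx, Finset.card_erase_of_mem hcS, hc] at this
          omega
        have hNdd1 : ((S.erase dd).filter (fun u => ¬ G.Adj dd u)).card = 1 := by
          have := Finset.card_filter_add_card_filter_not
            (s := S.erase dd) (p := fun u => G.Adj dd u)
          have hMeqd : (S.erase dd).filter (fun u => G.Adj dd u) = S.filter (G.Adj dd) := by
            ext u
            simp only [Finset.mem_filter, Finset.mem_erase]
            constructor
            · rintro ⟨⟨_, hu⟩, hadj⟩; exact ⟨hu, hadj⟩
            · rintro ⟨hu, hadj⟩; exact ⟨⟨(G.ne_of_adj hadj).symm, hu⟩, hadj⟩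
          rw [hMeqd, hothers dd hdS hdx', Finset.card_erase_of_mem hdS, hc] at this
          omega
        have hfc := unique_nonneighbor G S cc x hcS hNcc1 hx (Ne.symm hcx)
          (fun h => hNxc h.symm)
        have hfd := unique_nonneighbor G S dd x hdS hNdd1 hx (Ne.symm hdx')
          (fun h => hNxd h.symm)
        have hAca := hfc aa haS hac hax
        have hAcb := hfc bb hbS hbc hbx
        have hAcd := hfc dd hdS (Ne.symm hccdd) hdx'
        have hAda := hfd aa haS had hax
        have hAdb := hfd bb hbS hbd hbx
        -- aa and bb are not adjacent
        have hNab : ¬ G.Adj aa bb := by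
          intro hadj
          have hsub : {bb, cc, dd, x} ⊆ S.filter (G.Adj aa) := by
            intro y hy
            simp only [Finset.mem_insert, Finset.mem_singleton] at hy
            rcases hy with rfl | rfl | rfl | rfl
            · exact Finset.mem_filter.mpr ⟨hbS, hadj⟩
            · exact Finset.mem_filter.mpr ⟨hcS, hAca.symm⟩
            · exact Finset.mem_filter.mpr ⟨hdS, hAda.symm⟩
            · exact Finset.mem_filter.mpr ⟨hx, hAxa.symm⟩
          have hcard4 : ({bb, cc, dd, x} : Finset V).card = 4 := by
            rw [Finset.card_insert_of_notMem (by simp [hbc, hbd, hbx]),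
              Finset.card_insert_of_notMem (by simp [hccdd, hcx]),
              Finset.card_insert_of_notMem (by simp [hdx']),
              Finset.card_singleton]
          have := Finset.card_le_card hsub
          rw [hcard4, hothers aa haS hax] at this
          omega
        -- build the case1 iso
        have hAac := hAca.symm
        have hAad := hAda.symm
        have hAbc := hAcb.symm
        have hAbd := hAdb.symm
        have hAdc := hAcd.symm
        have hAax := hAxa.symm
        have hAbx := hAxb.symm
        have hNba : ¬ G.Adj bb aa := fun h => hNab h.symm
        have hNcx : ¬ G.Adj cc x := fun h => hNxc h.symm
        have hNdx : ¬ G.Adj dd x := fun h => hNxd h.symm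
        have e0 : ((0 : Fin 5) : ℕ) = 0 := by decide
        have e1 : ((1 : Fin 5) : ℕ) = 1 := by decide
        have e2 : ((2 : Fin 5) : ℕ) = 2 := by decide
        have e3 : ((3 : Fin 5) : ℕ) = 3 := by decide
        have e4 : ((4 : Fin 5) : ℕ) = 4 := by decide
        have hab' : aa ≠ bb := haabb
        have hba' : bb ≠ aa := Ne.symm haabb
        have hca' : cc ≠ aa := Ne.symm hac
        have hcb' : cc ≠ bb := Ne.symm hbc
        have hda' : dd ≠ aa := Ne.symm had
        have hdb' : dd ≠ bb := Ne.symm hbd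
        have hdc' : dd ≠ cc := Ne.symm hccdd
        have hxa' : x ≠ aa := Ne.symm hax
        have hxb' : x ≠ bb := Ne.symm hbx
        have hxc' : x ≠ cc := Ne.symm hcx
        have hxd' : x ≠ dd := Ne.symm hdx'
        have hmem5 : ∀ i, (![aa, bb, cc, dd, x] : Fin 5 → V) i ∈ S := by
          intro i; fin_cases i <;> assumption
        have hinj5 : Function.Injective (![aa, bb, cc, dd, x] : Fin 5 → V) := by
          intro i j hij
          fin_cases i <;> fin_cases j <;>
            first
              | rfl
              | exact absurd hij (by assumption)
        have hadj5 : ∀ i j, case1Graph.Adj i j ↔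
            G.Adj ((![aa, bb, cc, dd, x] : Fin 5 → V) i) ((![aa, bb, cc, dd, x] : Fin 5 → V) j) := by
          intro i j
          fin_cases i <;> fin_cases j <;>
            simp only [case1Graph, SimpleGraph.fromEdgeSet_adj, Set.mem_insert_iff,
              Set.mem_singleton_iff, Matrix.cons_val', Matrix.cons_val_zero,
              Matrix.cons_val_one, Matrix.head_cons, Matrix.cons_val_two, Matrix.tail_cons,
              Matrix.cons_val_three, Matrix.cons_val_succ] <;>
            norm_num [Sym2.eq, Sym2.rel_iff', Prod.ext_iff, Fin.ext_iff, e0, e1, e2, e3, e4] <;>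
            first
              | assumption
              | exact G.irrefl
        obtain ⟨iso⟩ := iso_of_list G case1Graph S ![aa, bb, cc, dd, x] hmem5 hinj5 hc hadj5
        exact (hCase1.false iso.symm).elim
      · omega
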